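/- For every n ≥ 1 and all x, x′ ∈ X, the normalized filtering distributions started from the two initial points satisfy ‖φₙˣ − φₙˣ′‖_TV ≤ ρⁿ, where ρ = 1 − σ₋/σ₊. (This is Corollary 1 in explicit finite-dimensional form: the conditional law of the hidden state Xₙ given observations and the initial state forgets the initial state geometrically, with a deterministic rate not depending on the observation functions g₁, …, gₙ.) -/

import Mathlib

/-!
Conditioning on the first hidden state `z`, the filter started at `x` is the average of
`z ↦ φ(z)`, the filter with shifted observations started at `z`, against the probability measure
proportional to `q(x, z) w(z) μ(dz)`, where the weight `w = g₁ · N'`, with `N'` the normalising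
constant of the shifted filter, does not depend on `x`.
Since `σ₋ ≤ q ≤ σ₊`, each of these measures dominates `σ₋/σ₊` times the normalised measure
`w μ` (a Doeblin minorisation), so two such averages of a function of oscillation `D` differ by
at most `(1 - σ₋/σ₊) D`. Induction on `n`, starting from the indicator of `A`, gives `ρⁿ⁺¹`.
-/

open MeasureTheory

/-- `Nseq μ q g x n = ∫_{Xⁿ} ∏_{k=1}ⁿ q(x_{k−1}, x_k) g_k(x_k) μ(dx₁)⋯μ(dxₙ)`,
with `x₀ := x` (for `n = 0` this is `1`, the empty product integrated against a
probability measure). Here the coordinate `xs k` of `xs : Fin n → X` plays the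
role of `x_{k+1}`, and `g (k+1)` the role of `g_{k+1}`. -/
noncomputable def Nseq {X : Type*} [MeasurableSpace X] (μ : Measure X)
    (q : X → X → ℝ) (g : ℕ → X → ℝ) (x : X) (n : ℕ) : ℝ :=
  ∫ xs : Fin n → X,
    ∏ k : Fin n, q (if (k : ℕ) = 0 then x else xs ⟨(k : ℕ) - 1, Nat.lt_of_le_of_lt (Nat.sub_le _ _) k.isLt⟩) (xs k) * g ((k : ℕ) + 1) (xs k)
    ∂(Measure.pi fun _ => μ)

/-- `phiSet μ q g x n A = φ_{n+1}ˣ(A)`, the normalized filtering distribution of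
the hidden state `x_{n+1}` given the observation functions `g₁, …, g_{n+1}` and
the initial state `x₀ = x`. -/
noncomputable def phiSet {X : Type*} [MeasurableSpace X] (μ : Measure X)
    (q : X → X → ℝ) (g : ℕ → X → ℝ) (x : X) (n : ℕ) (A : Set X) : ℝ :=
  (∫ xs : Fin (n + 1) → X,
      Set.indicator A (fun _ => (1 : ℝ)) (xs (Fin.last n)) *
        ∏ k : Fin (n + 1),
          q (if (k : ℕ) = 0 then x else xs ⟨(k : ℕ) - 1, Nat.lt_of_le_of_lt (Nat.sub_le _ _) k.isLt⟩) (xs k) * g ((k : ℕ) + 1) (xs k)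
      ∂(Measure.pi fun _ => μ)) / Nseq μ q g x (n + 1)

noncomputable def weightedAvg {X : Type*} [MeasurableSpace X] (μ : Measure X) (w h : X → ℝ) :
    ℝ :=
  (∫ z, w z * h z ∂μ) / ∫ z, w z ∂μ

section WeightedAverage

variable {X : Type*} [MeasurableSpace X] {μ : Measure X} {w a a' h : X → ℝ} {σm σp m D : ℝ}

lemma weightedAvg_neg (μ : Measure X) (w h : X → ℝ) :
    weightedAvg μ w (fun z => -h z) = -weightedAvg μ w h := by
  simp only [weightedAvg, mul_neg, integral_neg, neg_div]

lemma le_weightedAvg_mul (hσm : 0 < σm) (ha : AEStronglyMeasurable a μ)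
    (hal : ∀ z, σm ≤ a z) (hau : ∀ z, a z ≤ σp) (hw0 : ∀ z, 0 ≤ w z) (hwi : Integrable w μ)
    (hW : 0 < ∫ z, w z ∂μ) (hwh : Integrable (fun z => w z * h z) μ) (hm : ∀ z, m ≤ h z) :
    m + σm / σp * (weightedAvg μ w h - m) ≤ weightedAvg μ (fun z => a z * w z) h := by
  have ha_bdd : ∀ᵐ z ∂μ, ‖a z‖ ≤ σp := ae_of_all _ fun z => by
    rw [Real.norm_of_nonneg (hσm.le.trans (hal z))]
    exact hau z
  have haw : Integrable (fun z => a z * w z) μ := hwi.bdd_mul ha ha_bdd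
  have hawh : Integrable (fun z => a z * w z * h z) μ := by
    simpa only [mul_assoc] using hwh.bdd_mul ha ha_bdd
  have hmW : m * ∫ z, w z ∂μ ≤ ∫ z, w z * h z ∂μ := by
    rw [← integral_const_mul]
    exact integral_mono (hwi.const_mul m) hwh fun z => by nlinarith [hw0 z, hm z]
  have hσmA : σm * ∫ z, w z ∂μ ≤ ∫ z, a z * w z ∂μ := by
    rw [← integral_const_mul]
    exact integral_mono (hwi.const_mul σm) haw fun z => by nlinarith [hw0 z, hal z]
  have hAσp : ∫ z, a z * w z ∂μ ≤ σp * ∫ z, w z ∂μ := by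
    rw [← integral_const_mul]
    exact integral_mono haw (hwi.const_mul σp) fun z => by nlinarith [hw0 z, hau z]
  -- integrate `(a - σm) w (h - m) ≥ 0`
  have hminor : σm * (∫ z, w z * h z ∂μ - m * ∫ z, w z ∂μ)
      ≤ ∫ z, a z * w z * h z ∂μ - m * ∫ z, a z * w z ∂μ := by
    rw [← integral_const_mul, ← integral_const_mul, ← integral_sub hwh (hwi.const_mul m),
      ← integral_const_mul, ← integral_sub hawh (haw.const_mul m)]
    refine integral_mono ((hwh.sub (hwi.const_mul m)).const_mul σm)
      (hawh.sub (haw.const_mul m)) fun z => ?_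
    nlinarith [mul_nonneg (mul_nonneg (sub_nonneg.2 (hal z)) (hw0 z)) (sub_nonneg.2 (hm z))]
  have hσp : 0 < σp := by nlinarith
  have hA : 0 < ∫ z, a z * w z ∂μ := by nlinarith
  unfold weightedAvg
  generalize ∫ z, w z ∂μ = W at *
  generalize ∫ z, w z * h z ∂μ = I at *
  generalize ∫ z, a z * w z ∂μ = A at *
  generalize ∫ z, a z * w z * h z ∂μ = B at *
  have hIm : 0 ≤ I / W - m := by rw [sub_nonneg, le_div_iff₀ hW]; linarith
  have hcA : σm / σp * A ≤ σm * W := by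
    rw [div_mul_eq_mul_div, div_le_iff₀ hσp]; nlinarith
  have key : σm / σp * (I / W - m) * A ≤ σm * (I - m * W) :=
    calc σm / σp * (I / W - m) * A = σm / σp * A * (I / W - m) := by ring
      _ ≤ σm * W * (I / W - m) := mul_le_mul_of_nonneg_right hcA hIm
      _ = σm * (I - m * W) := by field_simp
  rw [le_div_iff₀ hA]
  linear_combination key + hminor

lemma weightedAvg_mul_mem_Icc (hσm : 0 < σm) (ha : AEStronglyMeasurable a μ)
    (hal : ∀ z, σm ≤ a z) (hau : ∀ z, a z ≤ σp) (hw0 : ∀ z, 0 ≤ w z) (hwi : Integrable w μ)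
    (hW : 0 < ∫ z, w z ∂μ) (hh : AEStronglyMeasurable h μ) (hm : ∀ z, m ≤ h z)
    (hM : ∀ z, h z ≤ m + D) :
    weightedAvg μ (fun z => a z * w z) h ∈ Set.Icc (m + σm / σp * (weightedAvg μ w h - m))
      (m + D - σm / σp * (m + D - weightedAvg μ w h)) := by
  have hwh : Integrable (fun z => w z * h z) μ :=
    hwi.mul_bdd hh (ae_of_all _ fun z => abs_le_max_abs_abs (hm z) (hM z))
  have hwh_neg : Integrable (fun z => w z * -h z) μ := by
    simpa only [mul_neg] using hwh.fun_neg
  have upper := le_weightedAvg_mul hσm ha hal hau hw0 hwi hW hwh_neg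
    (fun z => neg_le_neg (hM z))
  rw [weightedAvg_neg, weightedAvg_neg] at upper
  exact ⟨le_weightedAvg_mul hσm ha hal hau hw0 hwi hW hwh hm, by linarith⟩

theorem abs_weightedAvg_mul_sub_le (hσm : 0 < σm) (ha : AEStronglyMeasurable a μ)
    (hal : ∀ z, σm ≤ a z) (hau : ∀ z, a z ≤ σp) (ha' : AEStronglyMeasurable a' μ)
    (hal' : ∀ z, σm ≤ a' z) (hau' : ∀ z, a' z ≤ σp) (hw0 : ∀ z, 0 ≤ w z)
    (hwi : Integrable w μ) (hW : 0 < ∫ z, w z ∂μ) (hh : AEStronglyMeasurable h μ)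
    (hm : ∀ z, m ≤ h z) (hM : ∀ z, h z ≤ m + D) :
    |weightedAvg μ (fun z => a z * w z) h - weightedAvg μ (fun z => a' z * w z) h|
      ≤ (1 - σm / σp) * D := by
  rw [← Real.dist_eq]
  refine (Real.dist_le_of_mem_Icc
    (weightedAvg_mul_mem_Icc hσm ha hal hau hw0 hwi hW hh hm hM)
    (weightedAvg_mul_mem_Icc hσm ha' hal' hau' hw0 hwi hW hh hm hM)).trans_eq ?_
  ring

end WeightedAverage

theorem exists_forall_mem_Icc_of_abs_sub_le {ι : Type*} [Nonempty ι] {h : ι → ℝ} {D : ℝ}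
    (hD : ∀ i j, |h i - h j| ≤ D) : ∃ m, ∀ i, m ≤ h i ∧ h i ≤ m + D := by
  obtain ⟨i₀⟩ := ‹Nonempty ι›
  have hbdd : BddBelow (Set.range h) :=
    ⟨h i₀ - D, by rintro _ ⟨i, rfl⟩; linarith [(abs_le.1 (hD i₀ i)).2]⟩
  refine ⟨⨅ i, h i, fun i => ⟨ciInf_le hbdd i, ?_⟩⟩
  have : h i - D ≤ ⨅ j, h j := le_ciInf fun j => by linarith [(abs_le.1 (hD i j)).2]
  linarith

noncomputable def pathWeight {X : Type*} (q : X → X → ℝ) (g : ℕ → X → ℝ) (x : X) (n : ℕ)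
    (xs : Fin n → X) : ℝ :=
  ∏ k : Fin n,
    q (if (k : ℕ) = 0 then x else xs ⟨(k : ℕ) - 1, Nat.lt_of_le_of_lt (Nat.sub_le _ _) k.isLt⟩)
      (xs k) * g ((k : ℕ) + 1) (xs k)

section PathWeight

variable {X : Type*} {q : X → X → ℝ} {g : ℕ → X → ℝ} {σm σp : ℝ}

lemma pathWeight_zero (q : X → X → ℝ) (g : ℕ → X → ℝ) (x : X) (xs : Fin 0 → X) :
    pathWeight q g x 0 xs = 1 :=
  Finset.prod_empty

lemma pathWeight_cons (q : X → X → ℝ) (g : ℕ → X → ℝ) (x z : X) {n : ℕ} (ys : Fin n → X) :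
    pathWeight q g x (n + 1) (Fin.cons z ys)
      = q x z * g 1 z * pathWeight q (fun k => g (k + 1)) z n ys := by
  unfold pathWeight
  rw [Fin.prod_univ_succ]
  congr 1
  refine Finset.prod_congr rfl fun ⟨k, hk⟩ _ => ?_
  simp only [Fin.val_succ, Nat.add_sub_cancel, Nat.add_one_ne_zero, if_false, Fin.cons_succ]
  rcases k with _ | k <;> rfl

lemma prod_le_pathWeight (hσm : 0 ≤ σm) (hql : ∀ x x', σm ≤ q x x')
    (hg0 : ∀ k, 1 ≤ k → ∀ x, 0 ≤ g k x) (x : X) {n : ℕ} (xs : Fin n → X) :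
    ∏ k : Fin n, σm * g ((k : ℕ) + 1) (xs k) ≤ pathWeight q g x n xs :=
  Finset.prod_le_prod (fun k _ => mul_nonneg hσm (hg0 _ (Nat.le_add_left 1 k) _))
    fun k _ => mul_le_mul_of_nonneg_right (hql _ _) (hg0 _ (Nat.le_add_left 1 k) _)

lemma pathWeight_le_prod (hq0 : ∀ x x', 0 ≤ q x x') (hqu : ∀ x x', q x x' ≤ σp)
    (hg0 : ∀ k, 1 ≤ k → ∀ x, 0 ≤ g k x) (x : X) {n : ℕ} (xs : Fin n → X) :
    pathWeight q g x n xs ≤ ∏ k : Fin n, σp * g ((k : ℕ) + 1) (xs k) :=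
  Finset.prod_le_prod (fun k _ => mul_nonneg (hq0 _ _) (hg0 _ (Nat.le_add_left 1 k) _))
    fun k _ => mul_le_mul_of_nonneg_right (hqu _ _) (hg0 _ (Nat.le_add_left 1 k) _)

lemma pathWeight_nonneg (hq0 : ∀ x x', 0 ≤ q x x') (hg0 : ∀ k, 1 ≤ k → ∀ x, 0 ≤ g k x) (x : X)
    {n : ℕ} (xs : Fin n → X) : 0 ≤ pathWeight q g x n xs :=
  Finset.prod_nonneg fun k _ => mul_nonneg (hq0 _ _) (hg0 _ (Nat.le_add_left 1 k) _)

variable [MeasurableSpace X]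

lemma measurable_pathWeight (hq : Measurable (Function.uncurry q))
    (hgm : ∀ k, 1 ≤ k → Measurable (g k)) (n : ℕ) :
    Measurable fun p : X × (Fin n → X) => pathWeight q g p.1 n p.2 := by
  have hcoord : ∀ j, Measurable fun p : X × (Fin n → X) => p.2 j := fun j =>
    (measurable_pi_apply j).comp measurable_snd
  refine Finset.measurable_prod _ fun k _ =>
    Measurable.mul ?_ ((hgm _ (Nat.le_add_left 1 k)).comp (hcoord k))
  split_ifs
  · exact hq.comp (measurable_fst.prodMk (hcoord k))
  · exact hq.comp ((hcoord _).prodMk (hcoord k))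

end PathWeight

structure MixingModel {X : Type*} [MeasurableSpace X] (μ : Measure X) (σm σp : ℝ)
    (q : X → X → ℝ) (g : ℕ → X → ℝ) : Prop where
  pos : 0 < σm
  measurable_q : Measurable (Function.uncurry q)
  le_q : ∀ x x', σm ≤ q x x'
  q_le : ∀ x x', q x x' ≤ σp
  measurable_g : ∀ k, 1 ≤ k → Measurable (g k)
  g_nonneg : ∀ k, 1 ≤ k → ∀ x, 0 ≤ g k x
  integrable_g : ∀ k, 1 ≤ k → Integrable (g k) μ

section Integrals

variable {X : Type*} [MeasurableSpace X] {μ : Measure X} {q : X → X → ℝ} {g : ℕ → X → ℝ}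
  {σm σp : ℝ}

lemma MixingModel.shift (hM : MixingModel μ σm σp q g) :
    MixingModel μ σm σp q fun k => g (k + 1) where
  pos := hM.pos
  measurable_q := hM.measurable_q
  le_q := hM.le_q
  q_le := hM.q_le
  measurable_g k _ := hM.measurable_g (k + 1) (Nat.le_add_left 1 k)
  g_nonneg k _ := hM.g_nonneg (k + 1) (Nat.le_add_left 1 k)
  integrable_g k _ := hM.integrable_g (k + 1) (Nat.le_add_left 1 k)

lemma MixingModel.q_nonneg (hM : MixingModel μ σm σp q g) (x x' : X) : 0 ≤ q x x' :=
  hM.pos.le.trans (hM.le_q x x')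

lemma integral_pi_fin_succ [SigmaFinite μ] {n : ℕ} {Φ : (Fin (n + 1) → X) → ℝ}
    (hΦ : Integrable Φ (Measure.pi fun _ => μ)) :
    ∫ xs, Φ xs ∂(Measure.pi fun _ => μ)
      = ∫ z, ∫ ys, Φ (Fin.cons z ys) ∂(Measure.pi fun _ => μ) ∂μ := by
  have mp := (measurePreserving_piFinSuccAbove (fun _ : Fin (n + 1) => μ) 0).symm
  have hΦ' : Integrable (fun p => Φ ((MeasurableEquiv.piFinSuccAbove _ 0).symm p))
      (μ.prod (Measure.pi fun _ => μ)) :=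
    (mp.integrable_comp_emb (MeasurableEquiv.measurableEmbedding _)).mpr hΦ
  rw [← mp.integral_comp (MeasurableEquiv.measurableEmbedding _), integral_prod _ hΦ']
  simp [MeasurableEquiv.piFinSuccAbove_symm_apply, Fin.insertNthEquiv, Fin.insertNth_zero']

lemma integral_prod_const_mul [SigmaFinite μ] (c : ℝ) (n : ℕ) :
    ∫ xs : Fin n → X, ∏ k : Fin n, c * g ((k : ℕ) + 1) (xs k) ∂(Measure.pi fun _ => μ)
      = ∏ k : Fin n, c * ∫ y, g ((k : ℕ) + 1) y ∂μ := by
  rw [integral_fintype_prod_eq_prod (fun (k : Fin n) y => c * g ((k : ℕ) + 1) y)]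
  simp only [integral_const_mul]

lemma integrable_prod_const_mul [SigmaFinite μ] (hgi : ∀ k, 1 ≤ k → Integrable (g k) μ) (c : ℝ)
    (n : ℕ) :
    Integrable (fun xs : Fin n → X => ∏ k : Fin n, c * g ((k : ℕ) + 1) (xs k))
      (Measure.pi fun _ => μ) :=
  Integrable.fintype_prod (f := fun (k : Fin n) y => c * g ((k : ℕ) + 1) y)
    fun k => (hgi _ (Nat.le_add_left 1 k)).const_mul c

lemma MixingModel.integrable_pathWeight [SigmaFinite μ] (hM : MixingModel μ σm σp q g) (x : X)
    (n : ℕ) : Integrable (pathWeight q g x n) (Measure.pi fun _ => μ) := by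
  refine (integrable_prod_const_mul hM.integrable_g σp n).mono'
    ((measurable_pathWeight hM.measurable_q hM.measurable_g n).comp
      measurable_prodMk_left).aestronglyMeasurable (ae_of_all _ fun xs => ?_)
  rw [Real.norm_of_nonneg (pathWeight_nonneg hM.q_nonneg hM.g_nonneg x xs)]
  exact pathWeight_le_prod hM.q_nonneg hM.q_le hM.g_nonneg x xs

lemma Nseq_eq_integral_pathWeight (x : X) (n : ℕ) :
    Nseq μ q g x n = ∫ xs, pathWeight q g x n xs ∂(Measure.pi fun _ => μ) :=
  rfl

lemma phiSet_eq_div (x : X) (n : ℕ) (A : Set X) :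
    phiSet μ q g x n A = (∫ xs, A.indicator (fun _ => (1 : ℝ)) (xs (Fin.last n))
      * pathWeight q g x (n + 1) xs ∂(Measure.pi fun _ => μ)) / Nseq μ q g x (n + 1) :=
  rfl

lemma MixingModel.prod_le_Nseq [SigmaFinite μ] (hM : MixingModel μ σm σp q g) (x : X) (n : ℕ) :
    ∏ k : Fin n, σm * ∫ y, g ((k : ℕ) + 1) y ∂μ ≤ Nseq μ q g x n := by
  rw [← integral_prod_const_mul]
  exact integral_mono (integrable_prod_const_mul hM.integrable_g σm n)
    (hM.integrable_pathWeight x n) (prod_le_pathWeight hM.pos.le hM.le_q hM.g_nonneg x)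

lemma MixingModel.Nseq_le_prod [SigmaFinite μ] (hM : MixingModel μ σm σp q g) (x : X) (n : ℕ) :
    Nseq μ q g x n ≤ ∏ k : Fin n, σp * ∫ y, g ((k : ℕ) + 1) y ∂μ := by
  rw [← integral_prod_const_mul]
  exact integral_mono (hM.integrable_pathWeight x n)
    (integrable_prod_const_mul hM.integrable_g σp n)
    (pathWeight_le_prod hM.q_nonneg hM.q_le hM.g_nonneg x)

lemma MixingModel.Nseq_pos [SigmaFinite μ] (hM : MixingModel μ σm σp q g)
    (hgpos : ∀ k, 1 ≤ k → 0 < ∫ x, g k x ∂μ) (x : X) (n : ℕ) : 0 < Nseq μ q g x n :=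
  (Finset.prod_pos fun (k : Fin n) _ => mul_pos hM.pos (hgpos _ (Nat.le_add_left 1 k))).trans_le
    (hM.prod_le_Nseq x n)

lemma measurable_Nseq [SigmaFinite μ] (hq : Measurable (Function.uncurry q))
    (hgm : ∀ k, 1 ≤ k → Measurable (g k)) (n : ℕ) : Measurable fun x => Nseq μ q g x n :=
  (measurable_pathWeight hq hgm n).stronglyMeasurable.integral_prod_right'.measurable

lemma measurable_phiSet [SigmaFinite μ] (hq : Measurable (Function.uncurry q))
    (hgm : ∀ k, 1 ≤ k → Measurable (g k)) (n : ℕ) {A : Set X} (hA : MeasurableSet A) :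
    Measurable fun x => phiSet μ q g x n A := by
  have hF : Measurable fun p : X × (Fin (n + 1) → X) =>
      A.indicator (fun _ => (1 : ℝ)) (p.2 (Fin.last n)) * pathWeight q g p.1 (n + 1) p.2 :=
    ((measurable_const.indicator hA).comp ((measurable_pi_apply _).comp measurable_snd)).mul
      (measurable_pathWeight hq hgm (n + 1))
  exact hF.stronglyMeasurable.integral_prod_right'.measurable.div (measurable_Nseq hq hgm (n + 1))

lemma MixingModel.integrable_indicator_mul_pathWeight [SigmaFinite μ]
    (hM : MixingModel μ σm σp q g) (x : X) (n : ℕ) {A : Set X} (hA : MeasurableSet A) :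
    Integrable (fun xs : Fin (n + 1) → X =>
      A.indicator (fun _ => (1 : ℝ)) (xs (Fin.last n)) * pathWeight q g x (n + 1) xs)
      (Measure.pi fun _ => μ) :=
  (hM.integrable_pathWeight x (n + 1)).bdd_mul
    ((measurable_const.indicator hA).comp (measurable_pi_apply _)).aestronglyMeasurable
    (ae_of_all _ fun _ => norm_indicator_le_norm_self (fun _ => (1 : ℝ)) _ |>.trans_eq norm_one)

lemma integral_mul_pathWeight_succ [SigmaFinite μ] (x : X) {n : ℕ}
    {F : (Fin (n + 1) → X) → ℝ}
    (hF : Integrable (fun xs => F xs * pathWeight q g x (n + 1) xs) (Measure.pi fun _ => μ)) :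
    ∫ xs, F xs * pathWeight q g x (n + 1) xs ∂(Measure.pi fun _ => μ)
      = ∫ z, q x z * g 1 z * ∫ ys, F (Fin.cons z ys) * pathWeight q (fun k => g (k + 1)) z n ys
          ∂(Measure.pi fun _ => μ) ∂μ := by
  rw [integral_pi_fin_succ hF]
  congr 1 with z
  rw [← integral_const_mul]
  congr 1 with ys
  rw [pathWeight_cons]
  ring

lemma MixingModel.Nseq_succ [SigmaFinite μ] (hM : MixingModel μ σm σp q g) (x : X) (n : ℕ) :
    Nseq μ q g x (n + 1) = ∫ z, q x z * g 1 z * Nseq μ q (fun k => g (k + 1)) z n ∂μ := by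
  simpa only [one_mul, Nseq_eq_integral_pathWeight] using
    integral_mul_pathWeight_succ (μ := μ) x (F := fun _ => 1)
      (by simpa only [one_mul] using hM.integrable_pathWeight x (n + 1))

end Integrals

section Recursion

variable {X : Type*} [MeasurableSpace X] {μ : Measure X} {q : X → X → ℝ} {g : ℕ → X → ℝ}
  {σm σp : ℝ} {A : Set X}

lemma MixingModel.phiSet_zero [IsProbabilityMeasure μ] (hM : MixingModel μ σm σp q g) (x : X)
    (hA : MeasurableSet A) :
    phiSet μ q g x 0 A = weightedAvg μ (fun z => q x z * g 1 z) (A.indicator fun _ => 1) := by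
  rw [phiSet_eq_div, integral_mul_pathWeight_succ x (hM.integrable_indicator_mul_pathWeight x 0 hA),
    hM.Nseq_succ]
  simp [weightedAvg, pathWeight_zero, Nseq_eq_integral_pathWeight]

lemma MixingModel.phiSet_succ [SigmaFinite μ] (hM : MixingModel μ σm σp q g)
    (hgpos : ∀ k, 1 ≤ k → 0 < ∫ x, g k x ∂μ) (x : X) (n : ℕ) (hA : MeasurableSet A) :
    phiSet μ q g x (n + 1) A = weightedAvg μ
      (fun z => q x z * (g 1 z * Nseq μ q (fun k => g (k + 1)) z (n + 1)))
      (fun z => phiSet μ q (fun k => g (k + 1)) z n A) := by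
  rw [phiSet_eq_div, weightedAvg,
    integral_mul_pathWeight_succ x (hM.integrable_indicator_mul_pathWeight x (n + 1) hA),
    hM.Nseq_succ]
  congr 1
  · congr 1 with z
    have hN := hM.shift.Nseq_pos (fun k _ => hgpos (k + 1) (Nat.le_add_left 1 k)) z (n + 1)
    rw [phiSet_eq_div, ← Fin.succ_last]
    simp only [Fin.cons_succ]
    field_simp
  · simp only [mul_assoc]

lemma MixingModel.exists_weight_phiSet_succ [SigmaFinite μ] (hM : MixingModel μ σm σp q g)
    (hgpos : ∀ k, 1 ≤ k → 0 < ∫ x, g k x ∂μ) (n : ℕ) (hA : MeasurableSet A) :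
    ∃ w : X → ℝ, (∀ z, 0 ≤ w z) ∧ Integrable w μ ∧ 0 < ∫ z, w z ∂μ ∧
      ∀ x, phiSet μ q g x (n + 1) A
        = weightedAvg μ (fun z => q x z * w z) fun z => phiSet μ q (fun k => g (k + 1)) z n A := by
  set N := fun z => Nseq μ q (fun k => g (k + 1)) z (n + 1)
  set c := ∏ k : Fin (n + 1), σm * ∫ y, g ((k : ℕ) + 1 + 1) y ∂μ
  have hg1 := hM.integrable_g 1 le_rfl
  have hcN : ∀ z, c ≤ N z := fun z => hM.shift.prod_le_Nseq z (n + 1)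
  have hc : 0 < c := Finset.prod_pos fun (k : Fin (n + 1)) _ => mul_pos hM.pos (hgpos _ (by omega))
  have hwi : Integrable (fun z => g 1 z * N z) μ :=
    hg1.mul_bdd (measurable_Nseq hM.measurable_q hM.shift.measurable_g (n + 1)).aestronglyMeasurable
      (ae_of_all _ fun z => (Real.norm_of_nonneg (hc.le.trans (hcN z))).trans_le
        (hM.shift.Nseq_le_prod z (n + 1)))
  refine ⟨fun z => g 1 z * N z, fun z => mul_nonneg (hM.g_nonneg 1 le_rfl z) (hc.le.trans (hcN z)),
    hwi, ?_, fun x => hM.phiSet_succ hgpos x n hA⟩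
  calc 0 < ∫ z, g 1 z * c ∂μ := by
        rw [integral_mul_const]
        exact mul_pos (hgpos 1 le_rfl) hc
    _ ≤ ∫ z, g 1 z * N z ∂μ := integral_mono (hg1.mul_const c) hwi fun z =>
        mul_le_mul_of_nonneg_left (hcN z) (hM.g_nonneg 1 le_rfl z)

theorem MixingModel.abs_phiSet_sub_le [IsProbabilityMeasure μ] (hM : MixingModel μ σm σp q g)
    (hgpos : ∀ k, 1 ≤ k → 0 < ∫ x, g k x ∂μ) (n : ℕ) (x x' : X) (hA : MeasurableSet A) :
    |phiSet μ q g x n A - phiSet μ q g x' n A| ≤ (1 - σm / σp) ^ (n + 1) := by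
  have hq : ∀ y, AEStronglyMeasurable (q y) μ := fun y =>
    hM.measurable_q.of_uncurry_left.aestronglyMeasurable
  induction n generalizing g x x' with
  | zero =>
    rw [hM.phiSet_zero x hA, hM.phiSet_zero x' hA, zero_add, pow_one, ← mul_one (1 - σm / σp)]
    exact abs_weightedAvg_mul_sub_le hM.pos (hq x) (hM.le_q x) (hM.q_le x) (hq x') (hM.le_q x')
      (hM.q_le x') (hM.g_nonneg 1 le_rfl) (hM.integrable_g 1 le_rfl) (hgpos 1 le_rfl)
      (measurable_const.indicator hA).aestronglyMeasurable
      (fun z => Set.indicator_nonneg (fun _ _ => zero_le_one) z)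
      (fun z => (Set.indicator_le_self' (fun _ _ => zero_le_one) z).trans_eq (zero_add 1).symm)
  | succ n ih =>
    have := nonempty_of_isProbabilityMeasure μ
    have hgpos' : ∀ k, 1 ≤ k → 0 < ∫ x, g (k + 1) x ∂μ := fun k _ =>
      hgpos (k + 1) (Nat.le_add_left 1 k)
    obtain ⟨m, hm⟩ := exists_forall_mem_Icc_of_abs_sub_le fun z z' => ih hM.shift hgpos' z z'
    obtain ⟨w, hw0, hwi, hW, hφ⟩ := hM.exists_weight_phiSet_succ hgpos n hA
    rw [hφ x, hφ x', pow_succ']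
    exact abs_weightedAvg_mul_sub_le hM.pos (hq x) (hM.le_q x) (hM.q_le x) (hq x') (hM.le_q x')
      (hM.q_le x') hw0 hwi hW
      (measurable_phiSet hM.measurable_q hM.shift.measurable_g n hA).aestronglyMeasurable
      (fun z => (hm z).1) (fun z => (hm z).2)

end Recursion

theorem filtering_forgets_initial_condition
    {X : Type*} [MeasurableSpace X] (μ : Measure X) [IsProbabilityMeasure μ]
    (σm σp : ℝ) (hσm : 0 < σm)
    (q : X → X → ℝ) (hq : Measurable (Function.uncurry q))
    (hql : ∀ x x', σm ≤ q x x') (hqu : ∀ x x', q x x' ≤ σp)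
    (g : ℕ → X → ℝ) (hgm : ∀ k, 1 ≤ k → Measurable (g k))
    (hg0 : ∀ k, 1 ≤ k → ∀ x, 0 ≤ g k x)
    (hgi : ∀ k, 1 ≤ k → Integrable (g k) μ)
    (hgpos : ∀ k, 1 ≤ k → 0 < ∫ x, g k x ∂μ)
    (n : ℕ) (x x' : X) (A : Set X) (hA : MeasurableSet A) :
    |phiSet μ q g x n A - phiSet μ q g x' n A| ≤ (1 - σm / σp) ^ (n + 1) :=
  MixingModel.abs_phiSet_sub_le ⟨hσm, hq, hql, hqu, hgm, hg0, hgi⟩ hgpos n x x' hA
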